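/- Let μ and ν be probability measures on the grid G = {1,…,N}^d and let c be a separable ground cost, c(a,b) = Σ_{i=1}^d Δ_i(a_i,b_i). Then 𝓡(μ,ν) ≤ 𝒲_c(μ,ν): the minimum of R over flow charts between μ and ν is at most the minimum of Σ c·π over transport plans π between μ and ν. -/
import Mathlib


open Finset
open scoped Classical

/-- Merge: coordinates `k < i` come from `b`, coordinates `k ≥ i` come from `a`. -/
noncomputable def mergeLt {N d : ℕ} (i : Fin d) (a b : Fin d → Fin N) : Fin d → Fin N :=
  fun k => if (k : ℕ) < (i : ℕ) then b k else a k

/-- The flow chart induced by a transport plan `π`, by partial marginalization. -/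
noncomputable def mkF {N d : ℕ} (π : (Fin d → Fin N) → (Fin d → Fin N) → ℝ)
    (i : Fin d) (g : Fin d → Fin N) (β : Fin N) : ℝ :=
  ∑ a : Fin d → Fin N, ∑ b : Fin d → Fin N,
    if mergeLt i a b = g ∧ b i = β then π a b else 0

lemma mkF_marg1 {N d : ℕ} (hd : 0 < d) (a : Fin d → Fin N)
    (π : (Fin d → Fin N) → (Fin d → Fin N) → ℝ) :
    ∑ β : Fin N, mkF π ⟨0, hd⟩ a β = ∑ b, π a b := by
  have key : ∀ (a' b : Fin d → Fin N), mergeLt (⟨0, hd⟩ : Fin d) a' b = a' := by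
    intro a' b; funext k; simp [mergeLt]
  simp only [mkF, key]
  rw [Finset.sum_comm]
  have step : ∀ a' : Fin d → Fin N,
      (∑ β : Fin N, ∑ b : Fin d → Fin N,
        if a' = a ∧ b (⟨0, hd⟩ : Fin d) = β then π a' b else 0)
      = if a' = a then ∑ b, π a' b else 0 := by
    intro a'
    rw [Finset.sum_comm]
    by_cases h : a' = a
    · simp [h, Finset.sum_ite_eq]
    · simp [h]
  rw [Finset.sum_congr rfl fun a' _ => step a', Finset.sum_ite_eq' univ a]
  simp

lemma mkF_marg2 {N d : ℕ} (hd : 0 < d) (b : Fin d → Fin N)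
    (π : (Fin d → Fin N) → (Fin d → Fin N) → ℝ) :
    ∑ α : Fin N, mkF π ⟨d - 1, Nat.sub_lt hd Nat.one_pos⟩
        (Function.update b ⟨d - 1, Nat.sub_lt hd Nat.one_pos⟩ α)
        (b ⟨d - 1, Nat.sub_lt hd Nat.one_pos⟩) = ∑ a, π a b := by
  set j : Fin d := ⟨d - 1, Nat.sub_lt hd Nat.one_pos⟩ with hj
  have hjv : (j : ℕ) = d - 1 := rfl
  have hlt : ∀ k : Fin d, (k : ℕ) < (j : ℕ) ↔ k ≠ j := by
    intro k
    constructor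
    · intro h hk; rw [hk] at h; exact lt_irrefl _ h
    · intro h
      have h1 : (k : ℕ) ≠ (j : ℕ) := fun hc => h (Fin.ext hc)
      have h2 := k.isLt
      rw [hjv] at h1 ⊢
      omega
  have key : ∀ (α : Fin N) (a' b' : Fin d → Fin N),
      (mergeLt j a' b' = Function.update b j α ∧ b' j = b j) ↔ (b' = b ∧ a' j = α) := by
    intro α a' b'
    constructor
    · rintro ⟨h1, h2⟩
      constructor
      · funext k
        by_cases hk : k = j
        · rw [hk]; exact h2
        · have := congrFun h1 k
          rw [mergeLt] at this
          simp only [(hlt k).mpr hk, if_pos] at this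
          rwa [Function.update_of_ne hk] at this
      · have := congrFun h1 j
        rw [mergeLt] at this
        simp only [lt_irrefl, if_neg (lt_irrefl _)] at this
        rwa [Function.update_self] at this
    · rintro ⟨h1, h2⟩
      subst h1
      refine ⟨?_, rfl⟩
      funext k
      by_cases hk : k = j
      · subst hk; simp [mergeLt, h2]
      · simp [mergeLt, (hlt k).mpr hk, Function.update_of_ne hk]
  simp only [mkF]
  have step : ∀ α : Fin N,
      (∑ a' : Fin d → Fin N, ∑ b' : Fin d → Fin N,
        if mergeLt j a' b' = Function.update b j α ∧ b' j = b j then π a' b' else 0)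
      = ∑ a' : Fin d → Fin N, if a' j = α then π a' b else 0 := by
    intro α
    refine Finset.sum_congr rfl fun a' _ => ?_
    have : ∀ b' : Fin d → Fin N,
        (if mergeLt j a' b' = Function.update b j α ∧ b' j = b j then π a' b' else 0)
        = if b' = b then (if a' j = α then π a' b' else 0) else 0 := by
      intro b'
      rw [if_congr (key α a' b') rfl rfl, ite_and]
    rw [Finset.sum_congr rfl fun b' _ => this b', Finset.sum_ite_eq' univ b]
    simp
  rw [Finset.sum_congr rfl fun α _ => step α, Finset.sum_comm]
  refine Finset.sum_congr rfl fun a' _ => ?_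
  rw [Finset.sum_ite_eq univ (a' j)]
  simp

lemma mkF_compat {N d : ℕ} (π : (Fin d → Fin N) → (Fin d → Fin N) → ℝ)
    (i : Fin d) (hi : (i : ℕ) + 1 < d) (h : Fin d → Fin N) :
    ∑ α : Fin N, mkF π i (Function.update h i α) (h i)
      = ∑ β : Fin N, mkF π ⟨(i : ℕ) + 1, hi⟩ h β := by
  set Q : (Fin d → Fin N) → (Fin d → Fin N) → Prop :=
    fun a b => (∀ k : Fin d, (k : ℕ) ≤ (i : ℕ) → b k = h k) ∧
               (∀ k : Fin d, (i : ℕ) < (k : ℕ) → a k = h k) with hQ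
  have keyL : ∀ (α : Fin N) (a b : Fin d → Fin N),
      (mergeLt i a b = Function.update h i α ∧ b i = h i) ↔ (Q a b ∧ a i = α) := by
    intro α a b
    constructor
    · rintro ⟨h1, h2⟩
      have hai : a i = α := by
        have := congrFun h1 i
        simp only [mergeLt, lt_irrefl, if_neg (lt_irrefl _)] at this
        rwa [Function.update_self] at this
      refine ⟨⟨?_, ?_⟩, hai⟩
      · intro k hk
        rcases lt_or_eq_of_le hk with hk' | hk'
        · have hne : k ≠ i := fun hc => by rw [hc] at hk'; exact lt_irrefl _ hk'
          have := congrFun h1 k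
          simp only [mergeLt, if_pos hk'] at this
          rwa [Function.update_of_ne hne] at this
        · have : k = i := Fin.ext hk'
          rw [this]; exact h2
      · intro k hk
        have hne : k ≠ i := fun hc => by rw [hc] at hk; exact lt_irrefl _ hk
        have := congrFun h1 k
        simp only [mergeLt, if_neg (not_lt.mpr (le_of_lt hk))] at this
        rwa [Function.update_of_ne hne] at this
    · rintro ⟨⟨hb, ha⟩, hai⟩
      constructor
      · funext k
        by_cases hk : k = i
        · subst hk; simp [mergeLt, hai]
        · have hne : (k : ℕ) ≠ (i : ℕ) := fun hc => hk (Fin.ext hc)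
          rcases lt_or_gt_of_ne hne with hlt | hgt
          · simp [mergeLt, hlt, hb k (le_of_lt hlt), Function.update_of_ne hk]
          · simp [mergeLt, not_lt.mpr (le_of_lt hgt), ha k hgt, Function.update_of_ne hk]
      · exact hb i le_rfl
  have keyR : ∀ (β : Fin N) (a b : Fin d → Fin N),
      (mergeLt ⟨(i : ℕ) + 1, hi⟩ a b = h ∧ b ⟨(i : ℕ) + 1, hi⟩ = β) ↔ (Q a b ∧ b ⟨(i : ℕ) + 1, hi⟩ = β) := by
    intro β a b
    have hm : mergeLt ⟨(i : ℕ) + 1, hi⟩ a b = h ↔ Q a b := by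
      constructor
      · intro h1
        constructor
        · intro k hk
          have := congrFun h1 k
          simp only [mergeLt] at this
          rwa [if_pos (by omega : (k : ℕ) < (i : ℕ) + 1)] at this
        · intro k hk
          have := congrFun h1 k
          simp only [mergeLt] at this
          rwa [if_neg (by omega : ¬ (k : ℕ) < (i : ℕ) + 1)] at this
      · rintro ⟨hb, ha⟩
        funext k
        simp only [mergeLt]
        by_cases hk : (k : ℕ) < (i : ℕ) + 1
        · rw [if_pos hk]; exact hb k (by omega)
        · rw [if_neg hk]; exact ha k (by omega)
    rw [hm]
  have lhs_eq : ∑ α : Fin N, mkF π i (Function.update h i α) (h i)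
      = ∑ a : Fin d → Fin N, ∑ b : Fin d → Fin N, if Q a b then π a b else 0 := by
    simp only [mkF]
    rw [Finset.sum_comm]
    refine Finset.sum_congr rfl fun a _ => ?_
    rw [Finset.sum_comm]
    refine Finset.sum_congr rfl fun b _ => ?_
    have : ∀ α : Fin N,
        (if mergeLt i a b = Function.update h i α ∧ b i = h i then π a b else 0)
        = if Q a b then (if a i = α then π a b else 0) else 0 := by
      intro α
      rw [if_congr (keyL α a b) rfl rfl, ite_and]
    rw [Finset.sum_congr rfl fun α _ => this α]
    by_cases hq : Q a b
    · simp [hq, Finset.sum_ite_eq univ (a i)]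
    · simp [hq]
  have rhs_eq : ∑ β : Fin N, mkF π ⟨(i : ℕ) + 1, hi⟩ h β
      = ∑ a : Fin d → Fin N, ∑ b : Fin d → Fin N, if Q a b then π a b else 0 := by
    simp only [mkF]
    rw [Finset.sum_comm]
    refine Finset.sum_congr rfl fun a _ => ?_
    rw [Finset.sum_comm]
    refine Finset.sum_congr rfl fun b _ => ?_
    have : ∀ β : Fin N,
        (if mergeLt ⟨(i : ℕ) + 1, hi⟩ a b = h ∧ b ⟨(i : ℕ) + 1, hi⟩ = β then π a b else 0)
        = if Q a b then (if b ⟨(i : ℕ) + 1, hi⟩ = β then π a b else 0) else 0 := by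
      intro β
      rw [if_congr (keyR β a b) rfl rfl, ite_and]
    rw [Finset.sum_congr rfl fun β _ => this β]
    by_cases hq : Q a b
    · simp [hq, Finset.sum_ite_eq univ (b ⟨(i : ℕ) + 1, hi⟩)]
    · simp [hq]
  rw [lhs_eq, rhs_eq]

lemma mkF_cost {N d : ℕ} (π : (Fin d → Fin N) → (Fin d → Fin N) → ℝ)
    (Δ : Fin d → Fin N → Fin N → ℝ) (i : Fin d) :
    ∑ g : Fin d → Fin N, ∑ β : Fin N, Δ i (g i) β * mkF π i g β
      = ∑ a : Fin d → Fin N, ∑ b : Fin d → Fin N, Δ i (a i) (b i) * π a b := by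
  set T : (Fin d → Fin N) → Fin N → (Fin d → Fin N) → (Fin d → Fin N) → ℝ :=
    fun g β a b => Δ i (g i) β * (if mergeLt i a b = g ∧ b i = β then π a b else 0) with hT
  have expand : ∀ (g : Fin d → Fin N) (β : Fin N),
      Δ i (g i) β * mkF π i g β = ∑ a : Fin d → Fin N, ∑ b : Fin d → Fin N, T g β a b := by
    intro g β
    rw [mkF, Finset.mul_sum]
    exact Finset.sum_congr rfl fun a _ => Finset.mul_sum _ _ _
  calc ∑ g : Fin d → Fin N, ∑ β : Fin N, Δ i (g i) β * mkF π i g β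
      = ∑ g : Fin d → Fin N, ∑ β : Fin N, ∑ a : Fin d → Fin N, ∑ b : Fin d → Fin N, T g β a b := by
        exact Finset.sum_congr rfl fun g _ => Finset.sum_congr rfl fun β _ => expand g β
    _ = ∑ g : Fin d → Fin N, ∑ a : Fin d → Fin N, ∑ β : Fin N, ∑ b : Fin d → Fin N, T g β a b := by
        exact Finset.sum_congr rfl fun g _ => Finset.sum_comm
    _ = ∑ a : Fin d → Fin N, ∑ g : Fin d → Fin N, ∑ β : Fin N, ∑ b : Fin d → Fin N, T g β a b :=
        Finset.sum_comm
    _ = ∑ a : Fin d → Fin N, ∑ g : Fin d → Fin N, ∑ b : Fin d → Fin N, ∑ β : Fin N, T g β a b := by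
        exact Finset.sum_congr rfl fun a _ => Finset.sum_congr rfl fun g _ => Finset.sum_comm
    _ = ∑ a : Fin d → Fin N, ∑ b : Fin d → Fin N, ∑ g : Fin d → Fin N, ∑ β : Fin N, T g β a b := by
        exact Finset.sum_congr rfl fun a _ => Finset.sum_comm
    _ = ∑ a : Fin d → Fin N, ∑ b : Fin d → Fin N, Δ i (a i) (b i) * π a b := by
        refine Finset.sum_congr rfl fun a _ => Finset.sum_congr rfl fun b _ => ?_
        have step : ∀ (g : Fin d → Fin N) (β : Fin N),
            T g β a b
            = if g = mergeLt i a b then (if β = b i then Δ i (g i) β * π a b else 0) else 0 := by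
          intro g β
          have hiff : (mergeLt i a b = g ∧ b i = β) ↔ (g = mergeLt i a b ∧ β = b i) := by
            constructor <;> rintro ⟨h1, h2⟩ <;> exact ⟨h1.symm, h2.symm⟩
          rw [hT]
          simp only
          rw [if_congr hiff rfl rfl, ite_and]
          by_cases h1 : g = mergeLt i a b
          · by_cases h2 : β = b i <;> simp [h1, h2]
          · simp [h1]
        rw [Finset.sum_congr rfl fun g _ => (Finset.sum_congr rfl fun β _ => step g β)]
        have pull : ∀ g : Fin d → Fin N,
            (∑ β : Fin N, if g = mergeLt i a b then (if β = b i then Δ i (g i) β * π a b else 0) else 0)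
            = if g = mergeLt i a b then (∑ β : Fin N, if β = b i then Δ i (g i) β * π a b else 0) else 0 := by
          intro g; split <;> simp
        rw [Finset.sum_congr rfl fun g _ => pull g]
        rw [Finset.sum_ite_eq' univ (mergeLt i a b)]
        simp only [mem_univ, if_pos]
        rw [Finset.sum_ite_eq' univ (b i)]
        have hm : mergeLt i a b i = a i := by simp [mergeLt]
        simp [hm]

/-- A flow chart between `μ` and `ν` on the grid `{1,…,N}^d`: a `d`-tuple of
nonnegative families `F i : (Fin d → Fin N) → Fin N → ℝ`, where the first argument
`g` of `F i` encodes `(b₁,…,b_{i-1}, a_i,…,a_d)` (coordinates `k < i` hold `b_k`,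
coordinates `k ≥ i` hold `a_k`) and the last argument is `b_i`. -/
def IsFlowChart {N d : ℕ} (μ ν : (Fin d → Fin N) → ℝ)
    (F : Fin d → (Fin d → Fin N) → Fin N → ℝ) : Prop :=
  (∀ i g β, 0 ≤ F i g β) ∧
  (∀ hd : 0 < d, ∀ a : Fin d → Fin N, ∑ β : Fin N, F ⟨0, hd⟩ a β = μ a) ∧
  (∀ hd : 0 < d, ∀ b : Fin d → Fin N,
      ∑ α : Fin N, F ⟨d - 1, Nat.sub_lt hd Nat.one_pos⟩
        (Function.update b ⟨d - 1, Nat.sub_lt hd Nat.one_pos⟩ α)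
        (b ⟨d - 1, Nat.sub_lt hd Nat.one_pos⟩) = ν b) ∧
  (∀ i : Fin d, ∀ hi : (i : ℕ) + 1 < d, ∀ h : Fin d → Fin N,
      ∑ α : Fin N, F i (Function.update h i α) (h i)
        = ∑ β : Fin N, F ⟨(i : ℕ) + 1, hi⟩ h β)

/-- The objective `R(F₁,…,F_d) = ∑ᵢ ∑ Δᵢ(aᵢ,bᵢ) f⁽ⁱ⁾` of a flow chart for the
separable cost with summands `Δ i`. -/
def flowR {N d : ℕ} (Δ : Fin d → Fin N → Fin N → ℝ)
    (F : Fin d → (Fin d → Fin N) → Fin N → ℝ) : ℝ :=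
  ∑ i : Fin d, ∑ g : Fin d → Fin N, ∑ β : Fin N, Δ i (g i) β * F i g β

/-- For probability measures `μ`, `ν` on the grid `{1,…,N}^d` and
a separable cost `c(a,b) = ∑ i, Δ i (a i) (b i)`, the minimum of `R` over flow
charts between `μ` and `ν` is at most the minimum transport cost over transport
plans between `μ` and `ν`: `𝓡(μ,ν) ≤ 𝒲_c(μ,ν)`. -/
theorem flowChart_min_le_wasserstein (N d : ℕ) (hN : 0 < N) (hd : 0 < d)
    (μ ν : (Fin d → Fin N) → ℝ)
    (hμ0 : ∀ a, 0 ≤ μ a) (hμ1 : ∑ a, μ a = 1)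
    (hν0 : ∀ b, 0 ≤ ν b) (hν1 : ∑ b, ν b = 1)
    (Δ : Fin d → Fin N → Fin N → ℝ) (hΔ : ∀ i x y, 0 ≤ Δ i x y) :
    sInf {r : ℝ | ∃ F : Fin d → (Fin d → Fin N) → Fin N → ℝ,
        IsFlowChart μ ν F ∧ r = flowR Δ F}
      ≤ sInf {w : ℝ | ∃ π : (Fin d → Fin N) → (Fin d → Fin N) → ℝ,
        (∀ a b, 0 ≤ π a b) ∧
        (∀ a, ∑ b, π a b = μ a) ∧
        (∀ b, ∑ a, π a b = ν b) ∧
        w = ∑ a : Fin d → Fin N, ∑ b : Fin d → Fin N,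
              (∑ i : Fin d, Δ i (a i) (b i)) * π a b} := by
  classical
  set S1 : Set ℝ := {r : ℝ | ∃ F : Fin d → (Fin d → Fin N) → Fin N → ℝ,
      IsFlowChart μ ν F ∧ r = flowR Δ F} with hS1
  set S2 : Set ℝ := {w : ℝ | ∃ π : (Fin d → Fin N) → (Fin d → Fin N) → ℝ,
      (∀ a b, 0 ≤ π a b) ∧
      (∀ a, ∑ b, π a b = μ a) ∧
      (∀ b, ∑ a, π a b = ν b) ∧
      w = ∑ a : Fin d → Fin N, ∑ b : Fin d → Fin N,
            (∑ i : Fin d, Δ i (a i) (b i)) * π a b} with hS2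
  have hbdd : BddBelow S1 := by
    refine ⟨0, fun r hr => ?_⟩
    obtain ⟨F, hF, rfl⟩ := hr
    exact Finset.sum_nonneg fun i _ => Finset.sum_nonneg fun g _ =>
      Finset.sum_nonneg fun β _ => mul_nonneg (hΔ i (g i) β) (hF.1 i g β)
  have hne : S2.Nonempty := by
    refine ⟨_, fun a b => μ a * ν b, fun a b => mul_nonneg (hμ0 a) (hν0 b), ?_, ?_, rfl⟩
    · intro a; rw [← Finset.mul_sum, hν1, mul_one]
    · intro b
      rw [← Finset.sum_mul, hμ1, one_mul]
  have hsub : S2 ⊆ S1 := by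
    rintro w ⟨π, hπ0, hπμ, hπν, rfl⟩
    refine ⟨mkF π, ⟨?_, ?_, ?_, ?_⟩, ?_⟩
    · intro i g β
      exact Finset.sum_nonneg fun a _ => Finset.sum_nonneg fun b _ => by
        split <;> [exact hπ0 a b; exact le_rfl]
    · intro hd' a; rw [mkF_marg1 hd' a π]; exact hπμ a
    · intro hd' b; rw [mkF_marg2 hd' b π]; exact hπν b
    · intro i hi h; exact mkF_compat π i hi h
    · have : flowR Δ (mkF π)
          = ∑ a : Fin d → Fin N, ∑ b : Fin d → Fin N,
              (∑ i : Fin d, Δ i (a i) (b i)) * π a b := by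
        calc flowR Δ (mkF π)
            = ∑ i : Fin d, ∑ a : Fin d → Fin N, ∑ b : Fin d → Fin N,
                Δ i (a i) (b i) * π a b :=
              Finset.sum_congr rfl fun i _ => mkF_cost π Δ i
          _ = ∑ a : Fin d → Fin N, ∑ i : Fin d, ∑ b : Fin d → Fin N,
                Δ i (a i) (b i) * π a b := Finset.sum_comm
          _ = ∑ a : Fin d → Fin N, ∑ b : Fin d → Fin N, ∑ i : Fin d,
                Δ i (a i) (b i) * π a b :=
              Finset.sum_congr rfl fun a _ => Finset.sum_comm
          _ = ∑ a : Fin d → Fin N, ∑ b : Fin d → Fin N,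
                (∑ i : Fin d, Δ i (a i) (b i)) * π a b :=
              Finset.sum_congr rfl fun a _ => Finset.sum_congr rfl fun b _ =>
                (Finset.sum_mul _ _ _).symm
      exact this.symm
  exact csInf_le_csInf hbdd hne hsub
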